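/- For the complex associated to a linear map ∂ : C → E of finite-dimensional vector spaces as above, the cohomology in degree 1 (cokernel of δ₁) is isomorphic to Hom(ker ∂, coker ∂). -/

import Mathlib

variable {C E : Type*} [AddCommGroup C] [Module ℝ C] [AddCommGroup E] [Module ℝ E]

/-- The degree `-1` differential `δ₀(φ) = (φ∘∂, ∂∘φ)` of the deformation complex
of a linear map `∂ : C → E`. -/
def delta0 (p : C →ₗ[ℝ] E) :
    (E →ₗ[ℝ] C) →ₗ[ℝ] (C →ₗ[ℝ] C) × (E →ₗ[ℝ] E) where
  toFun φ := (φ.comp p, p.comp φ)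
  map_add' φ ψ := by ext <;> simp
  map_smul' r φ := by ext <;> simp

/-- The degree `0` differential `δ₁(ψ_C, ψ_E) = ∂∘ψ_C − ψ_E∘∂`. -/
def delta1 (p : C →ₗ[ℝ] E) :
    ((C →ₗ[ℝ] C) × (E →ₗ[ℝ] E)) →ₗ[ℝ] (C →ₗ[ℝ] E) where
  toFun ψ := p.comp ψ.1 - ψ.2.comp p
  map_add' ψ χ := by ext x; simp; abel
  map_smul' r ψ := by ext x; simp [smul_sub]

/-!
The class of `f : C → E` modulo `im δ₁` is detected by `f` restricted to `ker ∂` and read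
modulo `im ∂`. Over a field every map `ker ∂ → coker ∂` arises this way, and if `f` maps
`ker ∂` into `im ∂`, lifting `f|_{ker ∂}` through `∂` and extending it to `ψ_C` makes
`f - ∂∘ψ_C` vanish on `ker ∂`, so that it factors as `-ψ_E∘∂`.
-/

open LinearMap

section Factorization

variable {R K U V W : Type*} [AddCommGroup U] [AddCommGroup V] [AddCommGroup W]

theorem LinearMap.exists_comp_eq_of_range_le [Ring R] [Module R U] [Module R V] [Module R W]
    [Module.Projective R U] (p : V →ₗ[R] W) (h : U →ₗ[R] W) (hle : range h ≤ range p) :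
    ∃ g : U →ₗ[R] V, p ∘ₗ g = h := by
  obtain ⟨g, hg⟩ := Module.projective_lifting_property p.rangeRestrict
    (h.codRestrict (range p) fun u => hle ⟨u, rfl⟩) p.surjective_rangeRestrict
  exact ⟨g, ext fun u => congr_arg Subtype.val (congr($hg u))⟩

variable [DivisionRing K] [Module K U] [Module K V] [Module K W]

theorem LinearMap.exists_comp_eq_of_ker_le (p : V →ₗ[K] W) (h : V →ₗ[K] U)
    (hle : ker p ≤ ker h) : ∃ g : W →ₗ[K] U, g ∘ₗ p = h := by
  obtain ⟨g, hg⟩ := exists_extend ((ker p).liftQ h hle ∘ₗ p.quotKerEquivRange.symm.toLinearMap)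
  refine ⟨g, ext fun v => ?_⟩
  have hv : p.quotKerEquivRange.symm (p.rangeRestrict v) = Submodule.Quotient.mk v :=
    (LinearEquiv.symm_apply_eq _).2 rfl
  simpa [hv] using congr($hg (p.rangeRestrict v))

theorem Function.Injective.surjective_linearMapComp_right {f : U →ₗ[K] V} (hf : Injective f) :
    Surjective (fun g : V →ₗ[K] W ↦ g ∘ₗ f) := by
  obtain ⟨ℓ, hℓ⟩ := f.exists_leftInverse_of_injective (ker_eq_bot.2 hf)
  exact fun g =>
    ⟨g ∘ₗ ℓ, show (g ∘ₗ ℓ) ∘ₗ f = g by rw [LinearMap.comp_assoc, hℓ, LinearMap.comp_id]⟩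

end Factorization

section RestrictKerToCoker

variable {R V W : Type*} [CommRing R] [AddCommGroup V] [Module R V] [AddCommGroup W] [Module R W]

def restrictKerToCoker (p : V →ₗ[R] W) : (V →ₗ[R] W) →ₗ[R] (ker p →ₗ[R] W ⧸ range p) where
  toFun f := (range p).mkQ ∘ₗ f ∘ₗ (ker p).subtype
  map_add' f g := by ext; simp
  map_smul' r f := by ext; simp

theorem restrictKerToCoker_eq_zero_iff (p f : V →ₗ[R] W) :
    restrictKerToCoker p f = 0 ↔ ∀ x ∈ ker p, f x ∈ range p := by
  simp [LinearMap.ext_iff, restrictKerToCoker, Submodule.Quotient.mk_eq_zero]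

end RestrictKerToCoker

theorem restrictKerToCoker_surjective {K V W : Type*} [Field K] [AddCommGroup V] [Module K V]
    [AddCommGroup W] [Module K W] (p : V →ₗ[K] W) : Function.Surjective (restrictKerToCoker p) :=
  (Submodule.injective_subtype (ker p)).surjective_linearMapComp_right.comp
    (Submodule.mkQ_surjective (range p)).surjective_linearMapComp_left

theorem ker_restrictKerToCoker_eq_range_delta1 (p : C →ₗ[ℝ] E) :
    ker (restrictKerToCoker p) = range (delta1 p) := by
  refine le_antisymm (fun f hf => ?_) ?_
  · rw [mem_ker, restrictKerToCoker_eq_zero_iff] at hf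
    obtain ⟨g₀, hg₀⟩ := exists_comp_eq_of_range_le p (f ∘ₗ (ker p).subtype)
      (by rintro _ ⟨x, rfl⟩; exact hf x x.2)
    obtain ⟨ψC, hψC⟩ := exists_extend g₀
    obtain ⟨ψE, hψE⟩ := exists_comp_eq_of_ker_le p (f - p ∘ₗ ψC) fun x hx => by
      have hlift : p (g₀ ⟨x, hx⟩) = f x := congr($hg₀ ⟨x, hx⟩)
      have hext : ψC x = g₀ ⟨x, hx⟩ := congr($hψC ⟨x, hx⟩)
      simp [hlift, hext]
    refine ⟨(ψC, -ψE), ext fun x => ?_⟩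
    have hfactor : ψE (p x) = f x - p (ψC x) := congr($hψE x)
    simp [delta1, hfactor]
  · rintro _ ⟨ψ, rfl⟩
    rw [mem_ker, restrictKerToCoker_eq_zero_iff]
    intro x hx
    simp [delta1, mem_ker.1 hx]

theorem stmt11_general (p : C →ₗ[ℝ] E) :
    Nonempty (((C →ₗ[ℝ] E) ⧸ LinearMap.range (delta1 p)) ≃ₗ[ℝ]
      (LinearMap.ker p →ₗ[ℝ] (E ⧸ LinearMap.range p))) :=
  ⟨(Submodule.quotEquivOfEq _ _ (ker_restrictKerToCoker_eq_range_delta1 p).symm).trans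
    ((restrictKerToCoker p).quotKerEquivOfSurjective (restrictKerToCoker_surjective p))⟩

/-- the degree `1` cohomology (cokernel of δ₁) of the deformation
complex of `∂ : C → E` is isomorphic to `Hom(ker ∂, coker ∂)`. -/
theorem stmt11 [FiniteDimensional ℝ C] [FiniteDimensional ℝ E] (p : C →ₗ[ℝ] E) :
    Nonempty (((C →ₗ[ℝ] E) ⧸ LinearMap.range (delta1 p)) ≃ₗ[ℝ]
      (LinearMap.ker p →ₗ[ℝ] (E ⧸ LinearMap.range p))) :=
  stmt11_general p
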